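/- arXiv:1712.04026 — 3 statements merged into one kernel-verified Lean document; each statement's English description precedes it below -/
import Mathlib

section
/- Define sets of binary words (finite lists over the alphabet {0,1}) by 𝒫(0) = {ε} (ε the empty word) and, for n ≥ 1, 𝒫(n) = {w·1 : w ∈ 𝒫(n-1)} ∪ {1^k 0^{n-k} : 0 ≤ k ≤ n-1}. Then for every n ≥ 1, 𝒫(n) = {1^k 0^{n-p-k} 1^p : 0 ≤ p ≤ n-1 and 0 ≤ k ≤ n-p-1} ∪ {1^n}. -/
/-- `R m`: the `m` new regions created by adding the `m`-th line,
encoded as the binary words `1^k 0^{m-k}` for `0 ≤ k ≤ m-1`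
(`true` plays the role of the digit 1, `false` that of 0). -/
def newRegions (m : ℕ) : Set (List Bool) :=
  {w | ∃ k ≤ m - 1, w = List.replicate k true ++ List.replicate (m - k) false}

theorem plane_regions_encoding (P : ℕ → Set (List Bool))
    (h0 : P 0 = {[]})
    (hrec : ∀ n, 1 ≤ n → P n = (fun w => w ++ [true]) '' P (n - 1) ∪ newRegions n) :
    ∀ n, 1 ≤ n → P n =
      {w | ∃ p ≤ n - 1, ∃ k ≤ n - p - 1,
        w = List.replicate k true ++ List.replicate (n - p - k) false ++
          List.replicate p true} ∪ {List.replicate n true} := by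
  intro n hn
  induction n with
  | zero => omega
  | succ m ih =>
    rw [hrec (m+1) (by omega), Nat.add_sub_cancel]
    rcases Nat.eq_zero_or_pos m with hm | hm
    · subst hm
      rw [h0]
      ext w
      simp only [Set.mem_union, Set.mem_image, Set.mem_singleton_iff, Set.mem_setOf_eq,
        newRegions]
      constructor
      · rintro (⟨v, rfl, rfl⟩ | ⟨k, hk, rfl⟩)
        · right; rfl
        · left
          refine ⟨0, by omega, k, by omega, ?_⟩
          simp
      · rintro (⟨p, hp, k, hk, rfl⟩ | rfl)
        · right
          refine ⟨k, by omega, ?_⟩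
          have hp0 : p = 0 := by omega
          subst hp0; simp
        · left; exact ⟨[], rfl, rfl⟩
    · rw [ih hm]
      ext w
      simp only [Set.mem_union, Set.mem_image, Set.mem_setOf_eq, Set.mem_singleton_iff,
        newRegions]
      constructor
      · rintro (⟨v, (⟨p, hp, k, hk, rfl⟩ | rfl), rfl⟩ | ⟨k, hk, rfl⟩)
        · left
          refine ⟨p + 1, by omega, k, by omega, ?_⟩
          have h1 : m + 1 - (p + 1) - k = m - p - k := by omega
          rw [h1, List.replicate_succ' (n := p)]
          simp [List.append_assoc]
        · right
          rw [← List.replicate_succ']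
        · left
          refine ⟨0, by omega, k, by omega, ?_⟩
          simp
      · rintro (⟨p, hp, k, hk, rfl⟩ | rfl)
        · rcases Nat.eq_zero_or_pos p with hp0 | hp0
          · subst hp0
            right
            exact ⟨k, by omega, by simp⟩
          · left
            obtain ⟨q, rfl⟩ : ∃ q, p = q + 1 := ⟨p - 1, by omega⟩
            refine ⟨List.replicate k true ++ List.replicate (m - q - k) false ++
              List.replicate q true, Or.inl ⟨q, by omega, k, by omega, rfl⟩, ?_⟩
            have h1 : m + 1 - (q + 1) - k = m - q - k := by omega
            rw [h1, List.replicate_succ' (n := q)]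
            simp [List.append_assoc]
        · left
          exact ⟨List.replicate m true, Or.inr rfl, by rw [← List.replicate_succ']⟩
end

section
/- For every n ≥ 1, the set of binary words 𝒫(n) = {1^k 0^{n-p-k} 1^p : 0 ≤ p ≤ n-1 and 0 ≤ k ≤ n-p-1} ∪ {1^n} has cardinality (n·(n+1) + 2)/2, the (n+1)-st term of the lazy caterer's sequence. -/
lemma lead_len (k m p : ℕ) (hm : 1 ≤ m) :
    ((List.replicate k true ++ (List.replicate m false ++ List.replicate p true)).takeWhile
      id).length = k := by
  induction k with
  | zero =>
    obtain ⟨m', rfl⟩ := Nat.exists_eq_succ_of_ne_zero (by omega : m ≠ 0)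
    simp [List.replicate_succ, List.takeWhile_cons]
  | succ k ih =>
    rw [List.replicate_succ, List.cons_append, List.takeWhile_cons]
    simpa using ih

lemma word_eq (k m p k' m' p' : ℕ) (hm : 1 ≤ m) (hm' : 1 ≤ m')
    (h : List.replicate k true ++ List.replicate m false ++ List.replicate p true =
      List.replicate k' true ++ List.replicate m' false ++ List.replicate p' true) :
    k = k' ∧ p = p' := by
  have h1 := congrArg (fun w : List Bool => (w.takeWhile id).length) h
  simp only [List.append_assoc] at h1
  rw [lead_len k m p hm, lead_len k' m' p' hm'] at h1
  have h2 := congrArg (fun w : List Bool => (w.reverse.takeWhile id).length) h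
  simp only [List.reverse_append, List.reverse_replicate, List.append_assoc] at h2
  rw [lead_len p m k hm, lead_len p' m' k' hm'] at h2
  exact ⟨h1, h2⟩

theorem plane_regions_card (n : ℕ) (hn : 1 ≤ n) :
    ({w | ∃ p ≤ n - 1, ∃ k ≤ n - p - 1,
        w = List.replicate k true ++ List.replicate (n - p - k) false ++
          List.replicate p true} ∪ {List.replicate n true} : Set (List Bool)).ncard =
      (n * (n + 1) + 2) / 2 := by
  classical
  set f : (Σ _ : ℕ, ℕ) → List Bool := fun pk =>
    List.replicate pk.2 true ++ List.replicate (n - pk.1 - pk.2) false ++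
      List.replicate pk.1 true with hf
  set F : Finset (Σ _ : ℕ, ℕ) := (Finset.range n).sigma (fun p => Finset.range (n - p)) with hF
  have hset : ({w | ∃ p ≤ n - 1, ∃ k ≤ n - p - 1,
        w = List.replicate k true ++ List.replicate (n - p - k) false ++
          List.replicate p true} ∪ {List.replicate n true} : Set (List Bool)) =
      ↑(F.image f ∪ {List.replicate n true}) := by
    ext w
    simp only [Finset.coe_union, Finset.coe_image, Finset.coe_singleton, Set.mem_union,
      Set.mem_image, Finset.mem_coe, Set.mem_setOf_eq, Set.mem_singleton_iff]
    constructor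
    · rintro (⟨p, hp, k, hk, rfl⟩ | rfl)
      · refine Or.inl ⟨⟨p, k⟩, ?_, rfl⟩
        simp only [hF, Finset.mem_sigma, Finset.mem_range]
        omega
      · exact Or.inr rfl
    · rintro (⟨⟨p, k⟩, hpk, rfl⟩ | rfl)
      · simp only [hF, Finset.mem_sigma, Finset.mem_range] at hpk
        exact Or.inl ⟨p, by omega, k, by omega, rfl⟩
      · exact Or.inr rfl
  rw [hset, Set.ncard_coe_finset]
  have hinj : Set.InjOn f ↑F := by
    rintro ⟨p, k⟩ hpk ⟨p', k'⟩ hpk' heq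
    simp only [Finset.mem_coe, hF, Finset.mem_sigma, Finset.mem_range] at hpk hpk'
    obtain ⟨h1, h2⟩ := word_eq k (n - p - k) p k' (n - p' - k') p' (by omega) (by omega) heq
    simp_all
  have hnot : List.replicate n true ∉ F.image f := by
    simp only [Finset.mem_image, hf, not_exists]
    rintro ⟨p, k⟩ ⟨hpk, heq⟩
    simp only [hF, Finset.mem_sigma, Finset.mem_range] at hpk
    have := congrArg (fun w : List Bool => w.count false) heq
    simp [List.count_append, List.count_replicate] at this
    omega
  rw [Finset.card_union_of_disjoint (by simpa using hnot), Finset.card_image_of_injOn hinj,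
    Finset.card_singleton, hF, Finset.card_sigma]
  simp only [Finset.card_range]
  have hsum : ∑ p ∈ Finset.range n, (n - p) = ∑ i ∈ Finset.range n, (i + 1) := by
    rw [← Finset.sum_range_reflect]
    apply Finset.sum_congr rfl
    intro i hi
    simp only [Finset.mem_range] at hi
    omega
  have hshift : ∑ i ∈ Finset.range (n + 1), i = ∑ i ∈ Finset.range n, (i + 1) := by
    rw [Finset.sum_range_succ']
    simp
  have hgauss : (∑ i ∈ Finset.range (n + 1), i) * 2 = n * (n + 1) := by
    rw [Finset.sum_range_id_mul_two, Nat.add_sub_cancel, Nat.mul_comm]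
  omega
end

section
/- Let n ≥ 1, and let 𝒫(n) = {1^k 0^{n-p-k} 1^p : 0 ≤ p ≤ n-1, 0 ≤ k ≤ n-p-1} ∪ {1^n} and ℱ(n+1) = {1^p 0 1^k 0 1^{n-p-k-1} : 0 ≤ p ≤ n-1, 0 ≤ k ≤ n-p-1} ∪ {1^{n+1}} be the indicated sets of binary words. Then the map φ defined by φ(1^n) = 1^{n+1} and φ(1^k 0^{n-p-k} 1^p) = 1^p 0 1^k 0 1^{n-p-k-1} (for 0 ≤ p ≤ n-1 and 0 ≤ k ≤ n-p-1) is a well-defined bijection from 𝒫(n) onto ℱ(n+1). -/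
def lead (w : List Bool) : ℕ := (w.takeWhile id).length

lemma lead_spec (k : ℕ) (l : List Bool) :
    lead (List.replicate k true ++ false :: l) = k := by
  induction k with
  | zero => simp [lead]
  | succ k ih =>
    simp only [List.replicate_succ, List.cons_append, lead, List.takeWhile_cons] at *
    simp [ih]

lemma target_inj {p1 k1 m1 p2 k2 m2 : ℕ}
    (h : List.replicate p1 true ++ false :: (List.replicate k1 true ++ false :: List.replicate m1 true)
       = List.replicate p2 true ++ false :: (List.replicate k2 true ++ false :: List.replicate m2 true)) :
    p1 = p2 ∧ k1 = k2 ∧ m1 = m2 := by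
  have hp : p1 = p2 := by
    have := congrArg lead h
    rwa [lead_spec, lead_spec] at this
  subst hp
  have h2 := List.append_cancel_left h
  have h3 := (List.cons.injEq _ _ _ _).mp h2 |>.2
  have hk : k1 = k2 := by
    have := congrArg lead h3
    rwa [lead_spec, lead_spec] at this
  subst hk
  have h4 := List.append_cancel_left h3
  have h5 := (List.cons.injEq _ _ _ _).mp h4 |>.2
  have := congrArg List.length h5
  simp at this
  exact ⟨rfl, rfl, this⟩

noncomputable def phi (w : List Bool) : List Bool :=
  if w.all id then w ++ [true]
  else
    List.replicate (lead w.reverse) true ++ false ::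
      (List.replicate (lead w) true ++ false ::
        List.replicate (w.length - lead w.reverse - lead w - 1) true)

lemma phi_eq (n p k : ℕ) (hn : 1 ≤ n) (hp : p ≤ n - 1) (hk : k ≤ n - p - 1) :
    phi (List.replicate k true ++ List.replicate (n - p - k) false ++ List.replicate p true)
      = List.replicate p true ++ false :: (List.replicate k true ++
          false :: List.replicate (n - p - k - 1) true) := by
  have hz : n - p - k = (n - p - k - 1) + 1 := by omega
  set z := n - p - k with hzdef
  set w := List.replicate k true ++ List.replicate z false ++ List.replicate p true with hw
  have hwform : w = List.replicate k true ++ false ::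
      (List.replicate (z - 1) false ++ List.replicate p true) := by
    rw [hw, hz]; simp [List.replicate_succ, List.append_assoc]
  have hlead : lead w = k := by rw [hwform]; exact lead_spec k _
  have hrev : w.reverse = List.replicate p true ++ false ::
      (List.replicate (z - 1) false ++ List.replicate k true) := by
    rw [hw, hz]
    simp only [List.reverse_append, List.reverse_replicate, List.replicate_succ',
      List.append_assoc, List.cons_append, List.nil_append]
    simp
  have hleadr : lead w.reverse = p := by rw [hrev]; exact lead_spec p _
  have hlen : w.length = k + z + p := by simp [hw]; omega
  have hall : ¬ (w.all id = true) := by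
    rw [hwform]; simp
  rw [phi, if_neg hall, hlead, hleadr, hlen,
    show k + z + p - p - k - 1 = z - 1 by omega]

lemma phi_top (n : ℕ) :
    phi (List.replicate n true) = List.replicate (n + 1) true := by
  rw [phi, if_pos (by simp), ← List.replicate_succ']

theorem plane_foil_bijection (n : ℕ) (hn : 1 ≤ n) :
    ∃ φ : List Bool → List Bool,
      φ (List.replicate n true) = List.replicate (n + 1) true ∧
      (∀ p ≤ n - 1, ∀ k ≤ n - p - 1,
        φ (List.replicate k true ++ List.replicate (n - p - k) false ++
            List.replicate p true) =
          List.replicate p true ++ false :: (List.replicate k true ++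
            false :: List.replicate (n - p - k - 1) true)) ∧
      Set.BijOn φ
        ({w | ∃ p ≤ n - 1, ∃ k ≤ n - p - 1,
          w = List.replicate k true ++ List.replicate (n - p - k) false ++
            List.replicate p true} ∪ {List.replicate n true})
        ({w | ∃ p ≤ n - 1, ∃ k ≤ n - p - 1,
          w = List.replicate p true ++ false :: (List.replicate k true ++
            false :: List.replicate (n - p - k - 1) true)} ∪
          {List.replicate (n + 1) true}) := by
  refine ⟨phi, phi_top n, fun p hp k hk => phi_eq n p k hn hp hk, ?_, ?_, ?_⟩
  · -- MapsTo
    rintro w (⟨p, hp, k, hk, rfl⟩ | hw)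
    · exact Or.inl ⟨p, hp, k, hk, phi_eq n p k hn hp hk⟩
    · rw [Set.mem_singleton_iff] at hw
      subst hw
      exact Or.inr (by rw [phi_top]; rfl)
  · -- InjOn
    rintro a (⟨p1, hp1, k1, hk1, rfl⟩ | ha) b (⟨p2, hp2, k2, hk2, rfl⟩ | hb) hab
    · rw [phi_eq n p1 k1 hn hp1 hk1, phi_eq n p2 k2 hn hp2 hk2] at hab
      obtain ⟨hp, hk, -⟩ := target_inj hab
      subst hp; subst hk; rfl
    · rw [Set.mem_singleton_iff] at hb; subst hb
      rw [phi_eq n p1 k1 hn hp1 hk1, phi_top] at hab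
      have : false ∈ List.replicate (n + 1) true := hab ▸ (by simp)
      simp at this
    · rw [Set.mem_singleton_iff] at ha; subst ha
      rw [phi_eq n p2 k2 hn hp2 hk2, phi_top] at hab
      have : false ∈ List.replicate (n + 1) true := hab.symm ▸ (by simp)
      simp at this
    · rw [Set.mem_singleton_iff] at ha hb; rw [ha, hb]
  · -- SurjOn
    rintro u (⟨p, hp, k, hk, rfl⟩ | hu)
    · exact ⟨_, Or.inl ⟨p, hp, k, hk, rfl⟩, phi_eq n p k hn hp hk⟩
    · rw [Set.mem_singleton_iff] at hu; subst hu
      exact ⟨List.replicate n true, Or.inr rfl, phi_top n⟩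
end
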